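/- arXiv:1207.6083 — 7 statements merged into one kernel-verified Lean document; each statement's English description precedes it below -/
import Mathlib

section
/- For any positive semidefinite N×N real symmetric matrix L and any subset A ⊆ {1,...,N}, the sum of det(L_Y) over all Y with A ⊆ Y ⊆ {1,...,N} equals det(L + I_{Ā}), where L_Y is the principal submatrix of L indexed by Y and I_{Ā} is the diagonal matrix with ones in positions corresponding to the complement of A and zeros elsewhere. -/
/-!
Expanding `det (L + D)` multilinearly in the rows writes it as a sum over the sets `S` of rows
taken from `L`. When `D = diagonal d`, the remaining rows are `d i • eᵢ`, so the term of `S` is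
`(∏ i ∉ S, d i) * det L_S`. For `d` the indicator of the complement of `A`, that product is `1`
when `A ⊆ S` and `0` otherwise.
-/

open Matrix BigOperators

/-- The principal minor of `L` indexed by the subset `A`. -/
noncomputable def principalMinor {N : ℕ} (L : Matrix (Fin N) (Fin N) ℝ)
    (A : Finset (Fin N)) : ℝ :=
  (L.submatrix (fun i : A => (i : Fin N)) (fun j : A => (j : Fin N))).det

namespace Matrix

variable {n R : Type*} [Fintype n] [DecidableEq n] [CommRing R]

theorem det_add_eq_sum_det_piecewise (M M' : Matrix n n R) :
    det (M + M') = ∑ s : Finset n, det (of (s.piecewise M.row M'.row)) :=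
  detRowAlternating.map_add_univ M.row M'.row

theorem of_piecewise_row_diagonal (M : Matrix n n R) (d : n → R) (s : Finset n) :
    of (s.piecewise M.row (diagonal d).row) =
      diagonal (s.piecewise 1 d) * of (s.piecewise M.row (1 : Matrix n n R).row) := by
  ext i j
  by_cases hi : i ∈ s
  · simp only [of_apply, diagonal_mul, Finset.piecewise_eq_of_mem _ _ _ hi, Pi.one_apply, one_mul]
  · simp only [of_apply, diagonal_mul, Finset.piecewise_eq_of_notMem _ _ _ hi]
    simp only [row, diagonal_apply, one_apply, mul_ite, mul_one, mul_zero]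

theorem det_piecewise_row_diagonal (M : Matrix n n R) (d : n → R) (s : Finset n) :
    det (of (s.piecewise M.row (diagonal d).row)) =
      (∏ i ∈ sᶜ, d i) * det (M.submatrix ((↑) : s → n) (↑)) := by
  rw [of_piecewise_row_diagonal, det_mul, det_diagonal, Finset.prod_piecewise,
    Pi.one_def, Finset.prod_const_one, one_mul, det_piecewise_one_eq_submatrix_det,
    Finset.compl_eq_univ_sdiff]

theorem det_add_diagonal_eq_sum (M : Matrix n n R) (d : n → R) :
    det (M + diagonal d) =
      ∑ s : Finset n, (∏ i ∈ sᶜ, d i) * det (M.submatrix ((↑) : s → n) (↑)) := by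
  simp only [det_add_eq_sum_det_piecewise, det_piecewise_row_diagonal]

end Matrix

theorem stmt_0_general {N : ℕ} (L : Matrix (Fin N) (Fin N) ℝ)
    (A : Finset (Fin N)) :
    ∑ Y ∈ Finset.univ.filter (fun Y : Finset (Fin N) => A ⊆ Y),
        principalMinor L Y =
      (L + Matrix.diagonal (fun i => if i ∈ A then (0 : ℝ) else 1)).det := by
  have hcoeff (Y : Finset (Fin N)) :
      ∏ i ∈ Yᶜ, (if i ∈ A then (0 : ℝ) else 1) = if A ⊆ Y then 1 else 0 := by
    split_ifs with hAY
    · exact Finset.prod_eq_one fun i hi => if_neg fun hiA => (Finset.mem_compl.1 hi) (hAY hiA)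
    · obtain ⟨i, hiA, hiY⟩ := Finset.not_subset.1 hAY
      exact Finset.prod_eq_zero (Finset.mem_compl.2 hiY) (if_pos hiA)
  rw [det_add_diagonal_eq_sum, Finset.sum_filter]
  simp only [hcoeff, ite_mul, one_mul, zero_mul, principalMinor]

theorem stmt_0 {N : ℕ} (L : Matrix (Fin N) (Fin N) ℝ) (hL : L.PosSemidef)
    (A : Finset (Fin N)) :
    ∑ Y ∈ Finset.univ.filter (fun Y : Finset (Fin N) => A ⊆ Y),
        principalMinor L Y =
      (L + Matrix.diagonal (fun i => if i ∈ A then (0 : ℝ) else 1)).det :=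
  stmt_0_general L A
end

section
/- An L-ensemble is a determinantal point process: if P(Y) = det(L_Y)/det(L+I) for a positive semidefinite matrix L, then for every A ⊆ {1,...,N}, the probability that A ⊆ Y when Y is drawn from P equals det(K_A), where K = L(L+I)^{-1} = I - (L+I)^{-1}. -/
/-!
Let `D` be the diagonal indicator of the complement of `A` and `E = 1 - D`. Expanding
`det (L + D)` multilinearly in the rows, the term taking the rows of `L` on `Y` and those of `D`
elsewhere is `(∏_{i ∉ Y} D i i) det L_Y`, which is `det L_Y` if `Y ⊇ A` and `0` otherwise.
So `det (L + D) = ∑_{Y ⊇ A} det L_Y`. On the other hand `L + D = (L + 1) (1 - (L + 1)⁻¹ E)`,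
and by Sylvester's identity `det (1 - (L + 1)⁻¹ E) = det (1 - E (L + 1)⁻¹)`, a matrix whose
rows outside `A` are unit rows; its determinant is the principal minor on `A` of
`1 - (L + 1)⁻¹ = L (L + 1)⁻¹`.
-/

open Matrix BigOperators

namespace Matrix

variable {ι R : Type*} [Fintype ι] [DecidableEq ι] [CommRing R]

theorem det_add_diagonal (M : Matrix ι ι R) (d : ι → R) :
    (M + diagonal d).det =
      ∑ S : Finset ι, (∏ i ∈ Sᶜ, d i) * (M.submatrix ((↑) : S → ι) (↑)).det := by
  have hrows (S : Finset ι) : of (S.piecewise M.row (diagonal d).row) =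
      of fun i j => (if i ∈ S then 1 else d i) * of (S.piecewise M.row (row 1)) i j := by
    ext i j
    by_cases hi : i ∈ S <;> simp [hi, diagonal_apply, one_apply]
  have hprod (S : Finset ι) : ∏ i, (if i ∈ S then 1 else d i) = ∏ i ∈ Sᶜ, d i := by
    rw [← Fintype.prod_ite_mem Sᶜ d]
    exact Fintype.prod_congr _ _ fun i => by by_cases hi : i ∈ S <;> simp [hi]
  calc (M + diagonal d).det
      = ∑ S : Finset ι, (of (S.piecewise M.row (diagonal d).row)).det :=
        detRowAlternating.toMultilinearMap.map_add_univ M.row (diagonal d).row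
    _ = _ := by
        refine Finset.sum_congr rfl fun S _ => ?_
        rw [hrows, det_mul_column, hprod, det_piecewise_one_eq_submatrix_det]

theorem det_add_diagonal_indicator_compl (M : Matrix ι ι R) (A : Finset ι) :
    (M + diagonal fun i => if i ∈ A then 0 else 1).det =
      ∑ Y ∈ Finset.univ.filter (A ⊆ ·), (M.submatrix ((↑) : Y → ι) (↑)).det := by
  rw [det_add_diagonal, Finset.sum_filter]
  refine Finset.sum_congr rfl fun S _ => ?_
  by_cases hAS : A ⊆ S
  · have hprod : ∏ i ∈ Sᶜ, (if i ∈ A then (0 : R) else 1) = 1 :=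
      Finset.prod_eq_one fun i hi => if_neg fun hiA => Finset.mem_compl.1 hi (hAS hiA)
    rw [if_pos hAS, hprod, one_mul]
  · obtain ⟨a, haA, haS⟩ := Finset.not_subset.1 hAS
    rw [if_neg hAS, Finset.prod_eq_zero (Finset.mem_compl.2 haS) (by simp [haA]), zero_mul]

theorem det_one_sub_mul_diagonal_indicator (M : Matrix ι ι R) (A : Finset ι) :
    (1 - M * diagonal fun i => if i ∈ A then 1 else 0).det =
      ((1 - M).submatrix ((↑) : A → ι) (↑)).det := by
  have hrows : 1 + (diagonal fun i => if i ∈ A then 1 else 0) * -M =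
      of (A.piecewise (1 - M).row (row 1)) := by
    ext i j
    by_cases hi : i ∈ A <;> simp [hi, diagonal_mul, sub_eq_add_neg]
  rw [sub_eq_add_neg, ← neg_mul, det_one_add_mul_comm, hrows,
    det_piecewise_one_eq_submatrix_det]

theorem mul_inv_add_one_eq_one_sub_inv {M : Matrix ι ι R} (h : IsUnit (M + 1).det) :
    M * (M + 1)⁻¹ = 1 - (M + 1)⁻¹ := by
  rw [eq_sub_iff_add_eq, ← add_one_mul, mul_nonsing_inv _ h]

theorem sum_det_submatrix_supersets {M : Matrix ι ι R} (h : IsUnit (M + 1).det) (A : Finset ι) :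
    ∑ Y ∈ Finset.univ.filter (A ⊆ ·), (M.submatrix ((↑) : Y → ι) (↑)).det =
      (M + 1).det * ((M * (M + 1)⁻¹).submatrix ((↑) : A → ι) (↑)).det := by
  have hfactor : M + (diagonal fun i => if i ∈ A then 0 else 1) =
      (M + 1) * (1 - (M + 1)⁻¹ * diagonal fun i => if i ∈ A then 1 else 0) := by
    rw [mul_sub, mul_one, ← mul_assoc, mul_nonsing_inv _ h, one_mul, add_sub_assoc]
    congr 1
    ext i j
    by_cases hi : i ∈ A <;> simp [hi, diagonal_apply, one_apply]
  rw [← det_add_diagonal_indicator_compl, hfactor, det_mul,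
    det_one_sub_mul_diagonal_indicator, mul_inv_add_one_eq_one_sub_inv h]

end Matrix

theorem stmt_2 {N : ℕ} (L : Matrix (Fin N) (Fin N) ℝ) (hL : L.PosSemidef)
    (A : Finset (Fin N)) :
    (∑ Y ∈ Finset.univ.filter (fun Y : Finset (Fin N) => A ⊆ Y),
        principalMinor L Y / (L + 1).det) =
      principalMinor (L * (L + 1)⁻¹) A ∧
    L * (L + 1)⁻¹ = 1 - (L + 1)⁻¹ := by
  have hdet : (L + 1).det ≠ 0 := (PosDef.posSemidef_add hL PosDef.one).det_pos.ne'
  refine ⟨?_, mul_inv_add_one_eq_one_sub_inv hdet.isUnit⟩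
  rw [← Finset.sum_div, div_eq_iff hdet, mul_comm]
  exact sum_det_submatrix_supersets hdet.isUnit A
end

section
/- For a positive semidefinite L with eigenvalues λ_1,...,λ_N, the expected cardinality of a random subset Y drawn from the L-ensemble P(Y) = det(L_Y)/det(L+I) equals Σ_n λ_n/(λ_n+1) = tr(K), where K = L(L+I)^{-1}. -/
/-!
Expanding the determinant in principal minors gives `det (1 + x L) = ∑_Y x ^ |Y| det L_Y`, so the
expected cardinality is the logarithmic derivative of `x ↦ det (1 + x L)` at `x = 1`.
Diagonalising `L = Vᵀ diag(λ) V` with `V Vᵀ = 1` turns this polynomial into `∏ n, (λ_n x + 1)`,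
whose logarithmic derivative at `1` is `∑ n, λ_n / (λ_n + 1)`; the same diagonalisation gives
`L (L + 1)⁻¹ = Vᵀ diag(λ / (λ + 1)) V`, whose trace is that sum.
-/

open Matrix BigOperators

open Polynomial

namespace Matrix

variable {n R : Type*} [Fintype n] [DecidableEq n] [CommRing R]

theorem det_one_add_X_smul_eq_sum_minors (M : Matrix n n R) :
    det (1 + (X : R[X]) • M.map C) =
      ∑ s : Finset n, C (M.submatrix ((↑) : s → n) (↑)).det * X ^ s.card := by
  ext k
  simp only [coeff_det_one_add_X_smul_eq_sum_minors, finsetSum_coeff, coeff_C_mul_X_pow,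
    Finset.sum_ite, Finset.sum_const_zero, add_zero, Finset.powersetCard_eq_filter,
    Finset.powerset_univ]
  exact Finset.sum_congr (by ext; simp [eq_comm]) fun _ _ => rfl

theorem eval_one_derivative_det_one_add_X_smul (M : Matrix n n R) :
    (derivative (det (1 + (X : R[X]) • M.map C))).eval 1 =
      ∑ s : Finset n, (s.card : R) * (M.submatrix ((↑) : s → n) (↑)).det := by
  rw [det_one_add_X_smul_eq_sum_minors, derivative_sum, eval_finsetSum]
  refine Finset.sum_congr rfl fun s _ => ?_
  rw [derivative_C_mul_X_pow]
  simp [mul_comm]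

theorem eval_det_one_add_X_smul (M : Matrix n n R) (r : R) :
    (det (1 + (X : R[X]) • M.map C)).eval r = det (1 + r • M) := by
  rw [← coe_evalRingHom, RingHom.map_det]
  congr 1
  ext i j
  simp only [RingHom.mapMatrix_apply, map_apply, add_apply, smul_apply, one_apply]
  split_ifs <;> simp [mul_comm (M i j)]

theorem det_one_add_X_smul_diagonal (d : n → R) :
    det (1 + (X : R[X]) • (diagonal d).map C) = ∏ i, (C (d i) * X + 1) := by
  rw [diagonal_map (map_zero C), ← diagonal_smul, ← diagonal_one, diagonal_add, det_diagonal]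
  simp only [Pi.smul_apply, smul_eq_mul]
  exact Finset.prod_congr rfl fun i _ => by ring

theorem transpose_mul_diagonal_mul_eq_sum_vecMulVec {m : Type*} (V : Matrix n m R) (d : n → R) :
    Vᵀ * diagonal d * V = ∑ i, d i • vecMulVec (V i) (V i) := by
  ext j k
  simp [mul_apply, diagonal_apply, vecMulVec_apply, Matrix.sum_apply, mul_comm, mul_left_comm]

section Conj

variable {V : Matrix n n R} (hV : V * Vᵀ = 1)
include hV

theorem det_transpose_mul_mul (A : Matrix n n R) : det (Vᵀ * A * V) = det A :=
  det_conj_of_mul_eq_one (mul_eq_one_comm.mp hV) hV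

theorem trace_transpose_mul_mul (A : Matrix n n R) : trace (Vᵀ * A * V) = trace A := by
  rw [trace_mul_cycle, hV, Matrix.one_mul]

theorem transpose_mul_mul_mul_transpose_mul_mul (A B : Matrix n n R) :
    (Vᵀ * A * V) * (Vᵀ * B * V) = Vᵀ * (A * B) * V := by
  simp only [Matrix.mul_assoc]
  rw [← Matrix.mul_assoc V, hV, Matrix.one_mul]

theorem one_add_transpose_mul_mul (A : Matrix n n R) : 1 + Vᵀ * A * V = Vᵀ * (1 + A) * V := by
  rw [Matrix.mul_add, Matrix.add_mul, Matrix.mul_one, mul_eq_one_comm.mp hV]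

theorem inv_transpose_mul_mul (A : Matrix n n R) : (Vᵀ * A * V)⁻¹ = Vᵀ * A⁻¹ * V := by
  rw [Matrix.mul_inv_rev, Matrix.mul_inv_rev, inv_eq_left_inv hV,
    inv_eq_right_inv hV, Matrix.mul_assoc]

theorem det_one_add_X_smul_map_transpose_mul_mul (A : Matrix n n R) :
    det (1 + (X : R[X]) • (Vᵀ * A * V).map C) = det (1 + (X : R[X]) • A.map C) := by
  have hVC : V.map C * (V.map C)ᵀ = 1 := by
    rw [← transpose_map, ← Matrix.map_mul, hV, Matrix.map_one _ (map_zero C) (map_one C)]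
  rw [Matrix.map_mul, Matrix.map_mul, transpose_map, ← Matrix.smul_mul, ← Matrix.mul_smul,
    one_add_transpose_mul_mul hVC, det_transpose_mul_mul hVC]

end Conj

theorem inv_diagonal_of_ne_zero {K : Type*} [Field K] (d : n → K) (hd : ∀ i, d i ≠ 0) :
    (diagonal d)⁻¹ = diagonal fun i => (d i)⁻¹ :=
  inv_eq_right_inv <| by rw [diagonal_mul_diagonal, ← diagonal_one]; simp [hd]

end Matrix

theorem Polynomial.eval_derivative_prod_div_eval {ι K : Type*} [Fintype ι] [DecidableEq ι]
    [Field K] (d : ι → K) (x : K) (hd : ∀ i, d i * x + 1 ≠ 0) :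
    (derivative (∏ i, (C (d i) * X + 1))).eval x / (∏ i, (C (d i) * X + 1)).eval x =
      ∑ i, d i / (d i * x + 1) := by
  rw [div_eq_iff (by simpa [eval_prod] using Finset.prod_ne_zero_iff.mpr fun i _ => hd i),
    Finset.sum_mul, derivative_prod_finset, eval_finsetSum, eval_prod]
  refine Finset.sum_congr rfl fun i _ => ?_
  rw [← Finset.mul_prod_erase _ _ (Finset.mem_univ i), eval_mul, eval_prod]
  simp only [eval_add, eval_mul, eval_C, eval_X, eval_one, derivative_add, derivative_C_mul_X,
    derivative_one, add_zero]
  rw [← mul_assoc, div_mul_cancel₀ _ (hd i), mul_comm]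

theorem stmt_8_general {N : ℕ} (L : Matrix (Fin N) (Fin N) ℝ)
    (lam : Fin N → ℝ) (v : Fin N → Fin N → ℝ)
    (horth : ∀ m n, v m ⬝ᵥ v n = if m = n then (1 : ℝ) else 0)
    (hlam : ∀ n, 0 ≤ lam n)
    (hLdecomp : L = ∑ n, lam n • vecMulVec (v n) (v n)) :
    (∑ Y : Finset (Fin N), (Y.card : ℝ) * (principalMinor L Y / (L + 1).det)) =
      (∑ n, lam n / (lam n + 1)) ∧
    (∑ n, lam n / (lam n + 1)) = (L * (L + 1)⁻¹).trace := by
  set V : Matrix (Fin N) (Fin N) ℝ := Matrix.of v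
  have hV : V * Vᵀ = 1 := by
    ext m n
    simpa [mul_apply, one_apply, dotProduct, V] using horth m n
  have hLV : L = Vᵀ * diagonal lam * V := by
    rw [hLdecomp, transpose_mul_diagonal_mul_eq_sum_vecMulVec]
    rfl
  have hlam_add_one : ∀ n, lam n + 1 ≠ 0 := fun n => ne_of_gt (by linarith [hlam n])
  have hdet : det (1 + (X : ℝ[X]) • L.map C) = ∏ n, (C (lam n) * X + 1) := by
    rw [hLV, det_one_add_X_smul_map_transpose_mul_mul hV, det_one_add_X_smul_diagonal]
  constructor
  · calc (∑ Y : Finset (Fin N), (Y.card : ℝ) * (principalMinor L Y / (L + 1).det))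
        = (derivative (det (1 + (X : ℝ[X]) • L.map C))).eval 1 /
            (det (1 + (X : ℝ[X]) • L.map C)).eval 1 := by
          rw [eval_one_derivative_det_one_add_X_smul, eval_det_one_add_X_smul, one_smul,
            add_comm, Finset.sum_div]
          simp only [mul_div_assoc]
          rfl
      _ = ∑ n, lam n / (lam n + 1) := by
          rw [hdet, eval_derivative_prod_div_eval _ _ (by simpa using hlam_add_one)]
          simp
  · rw [hLV, add_comm, one_add_transpose_mul_mul hV, inv_transpose_mul_mul hV,
      transpose_mul_mul_mul_transpose_mul_mul hV, trace_transpose_mul_mul hV, ← diagonal_one,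
      diagonal_add, inv_diagonal_of_ne_zero _ fun n => by simpa [add_comm] using hlam_add_one n,
      diagonal_mul_diagonal, trace_diagonal]
    simp [div_eq_mul_inv, add_comm]

theorem stmt_8 {N : ℕ} (L : Matrix (Fin N) (Fin N) ℝ) (hL : L.PosSemidef)
    (lam : Fin N → ℝ) (v : Fin N → Fin N → ℝ)
    (horth : ∀ m n, v m ⬝ᵥ v n = if m = n then (1 : ℝ) else 0)
    (hlam : ∀ n, 0 ≤ lam n)
    (hLdecomp : L = ∑ n, lam n • vecMulVec (v n) (v n)) :
    (∑ Y : Finset (Fin N), (Y.card : ℝ) * (principalMinor L Y / (L + 1).det)) =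
      (∑ n, lam n / (lam n + 1)) ∧
    (∑ n, lam n / (lam n + 1)) = (L * (L + 1)⁻¹).trace :=
  stmt_8_general L lam v horth hlam hLdecomp
end

section
/- Mixture decomposition of a DPP: if L = Σ_{n=1}^N λ_n v_n v_n^T is an orthonormal eigendecomposition of a positive semidefinite matrix, then the L-ensemble P_L equals (1/det(L+I)) Σ_{J ⊆ {1,...,N}} P^{V_J} · Π_{n∈J} λ_n, where P^{V_J} is the determinantal process with projection marginal kernel K^{V_J} = Σ_{n∈J} v_n v_n^T; equivalently the two distributions agree on all marginals det(K_A). -/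
/-!
Write `L = Vᵀ diag(λ) V` with `V` orthogonal. Then `L (L + 1)⁻¹ = Vᵀ diag(p) V` with
`pₙ = λₙ / (λₙ + 1)`, and `det (L + 1) = ∏ (λₙ + 1)`. Expanding a minor of `∑ pₙ vₙvₙᵀ` by
multilinearity in the rows, only injective choices of rows survive, so the minor is affine in each
`pₙ` separately. A multi-affine function at `p` is the average of its values at the vertices `1_J`
under independent Bernoulli(`pₙ`) inclusion of each `n`; the weight of `J` is
`∏_{n ∈ J} λₙ / det (L + 1)`, and the value at `1_J` is the minor of `∑_{n ∈ J} vₙvₙᵀ`.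
-/

open Matrix BigOperators

open Finset

namespace Matrix

theorem submatrix_sum {ι l m n o α : Type*} [AddCommMonoid α] (s : Finset ι)
    (M : ι → Matrix m n α) (e : l → m) (f : o → n) :
    (∑ i ∈ s, M i).submatrix e f = ∑ i ∈ s, (M i).submatrix e f := by
  ext
  simp [Matrix.sum_apply]

theorem submatrix_vecMulVec {l m n o α : Type*} [Mul α] (u : m → α) (w : n → α)
    (e : l → m) (f : o → n) :
    (vecMulVec u w).submatrix e f = vecMulVec (u ∘ e) (w ∘ f) :=
  rfl

end Matrix

section MultiAffine

variable {R ι : Type*} [CommRing R] [Fintype ι] [DecidableEq ι]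

def bernoulliWeight (p : ι → R) (J : Finset ι) : R :=
  (∏ i ∈ J, p i) * ∏ i ∈ Jᶜ, (1 - p i)

theorem prod_mixture_eq_sum_bernoulliWeight (p f₀ f₁ : ι → R) :
    ∏ i, (p i * f₁ i + (1 - p i) * f₀ i) =
      ∑ J, bernoulliWeight p J * ∏ i, J.piecewise f₁ f₀ i := by
  rw [prod_add, powerset_univ]
  refine sum_congr rfl fun J _ => ?_
  rw [bernoulliWeight, prod_piecewise, univ_inter, ← compl_eq_univ_sdiff, prod_mul_distrib,
    prod_mul_distrib]
  ring

theorem prod_eq_sum_bernoulliWeight_mul (p : ι → R) (S : Finset ι) :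
    ∏ i ∈ S, p i = ∑ J, bernoulliWeight p J * ∏ i ∈ S, if i ∈ J then 1 else 0 := by
  have hind : ∀ (J : Finset ι) (i : ι),
      (J.piecewise (fun _ => (1 : R)) fun i => if i ∈ S then 0 else 1) i =
        if i ∈ S then (if i ∈ J then 1 else 0) else (1 : R) := fun J i => by
    by_cases hJ : i ∈ J <;> simp [hJ]
  calc ∏ i ∈ S, p i = ∏ i, if i ∈ S then p i else 1 := by rw [prod_ite_mem, univ_inter]
    _ = ∏ i, (p i * 1 + (1 - p i) * if i ∈ S then 0 else 1) :=
      prod_congr rfl fun i _ => by split_ifs <;> ring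
    _ = _ := prod_mixture_eq_sum_bernoulliWeight _ _ _
    _ = _ := sum_congr rfl fun J _ => by
      rw [prod_congr rfl fun i _ => hind J i, prod_ite_mem, univ_inter]

theorem bernoulliWeight_div_add_one {K : Type*} [Field K] {x : ι → K}
    (hx : ∀ i, x i + 1 ≠ 0) (J : Finset ι) :
    bernoulliWeight (fun i => x i / (x i + 1)) J = (∏ i ∈ J, x i) / ∏ i, (x i + 1) := by
  have hcompl : ∀ i, 1 - x i / (x i + 1) = (x i + 1)⁻¹ := fun i => by
    field_simp [hx i]
    ring
  rw [bernoulliWeight, prod_div_distrib, ← prod_mul_prod_compl J (fun i => x i + 1)]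
  simp only [hcompl, prod_inv_distrib]
  ring

section Determinant

variable {m : Type*} [Fintype m] [DecidableEq m]

theorem det_sum_smul_vecMulVec (c : ι → R) (u w : ι → m → R) :
    det (∑ i, c i • vecMulVec (u i) (w i)) =
      ∑ r : m → ι with Function.Injective r,
        (∏ a, c (r a)) * ((∏ a, u (r a) a) * det (of fun a => w (r a))) := by
  have hrows : det (∑ i, c i • vecMulVec (u i) (w i)) =
      detRowAlternating.toMultilinearMap fun a => ∑ i, (c i * u i a) • w i := by
    congr 1
    ext a b
    simp [Matrix.sum_apply, vecMulVec_apply, mul_assoc]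
  rw [hrows, MultilinearMap.map_sum]
  simp only [AlternatingMap.coe_multilinearMap, AlternatingMap.map_smul_univ, smul_eq_mul]
  rw [sum_filter_of_ne]
  · exact sum_congr rfl fun r _ => by rw [prod_mul_distrib, mul_assoc]; rfl
  · intro r _ hr
    contrapose! hr
    obtain ⟨a, b, hab, hne⟩ : ∃ a b, r a = r b ∧ a ≠ b := by
      simpa [Function.Injective] using hr
    rw [det_zero_of_row_eq hne (funext fun b => by rw [of_apply, of_apply, hab]), mul_zero,
      mul_zero]

theorem det_sum_smul_vecMulVec_eq_sum_bernoulliWeight (p : ι → R) (u w : ι → m → R) :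
    det (∑ i, p i • vecMulVec (u i) (w i)) =
      ∑ J, bernoulliWeight p J * det (∑ i ∈ J, vecMulVec (u i) (w i)) := by
  have hJ : ∀ J : Finset ι, ∑ i ∈ J, vecMulVec (u i) (w i) =
      ∑ i, (if i ∈ J then 1 else 0 : R) • vecMulVec (u i) (w i) := fun J => by
    simp [ite_smul, sum_ite_mem]
  simp_rw [hJ, det_sum_smul_vecMulVec, mul_sum]
  rw [sum_comm]
  refine sum_congr rfl fun r hr => ?_
  have hinj : Function.Injective r := (mem_filter.1 hr).2
  have hmonomial : ∏ a, p (r a) = ∑ J, bernoulliWeight p J * ∏ a, if r a ∈ J then 1 else 0 := by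
    simpa only [prod_image hinj.injOn] using prod_eq_sum_bernoulliWeight_mul p (univ.image r)
  simp_rw [hmonomial, sum_mul, mul_assoc]

end Determinant

theorem sum_smul_vecMulVec_eq_transpose_mul_diagonal_mul {m : Type*} (c : ι → R) (v : ι → m → R) :
    ∑ i, c i • vecMulVec (v i) (v i) = (of v)ᵀ * diagonal c * of v := by
  ext j k
  rw [mul_apply]
  simp only [mul_diagonal, transpose_apply, of_apply, Matrix.sum_apply,
    Matrix.smul_apply, vecMulVec_apply, smul_eq_mul]
  exact sum_congr rfl fun i _ => by ring

end MultiAffine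

section Orthonormal

variable {R n : Type*} [CommRing R] [Fintype n] [DecidableEq n] {v : n → n → R}

theorem conj_diagonal_mul_conj_diagonal (hv : of v * (of v)ᵀ = 1) (c d : n → R) :
    (of v)ᵀ * diagonal c * of v * ((of v)ᵀ * diagonal d * of v) =
      (of v)ᵀ * diagonal (c * d) * of v := by
  simp only [Matrix.mul_assoc]
  rw [← Matrix.mul_assoc (of v), hv, Matrix.one_mul, ← Matrix.mul_assoc (diagonal c),
    diagonal_mul_diagonal]
  rfl

theorem conj_diagonal_add_one (hv : of v * (of v)ᵀ = 1) (c : n → R) :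
    (of v)ᵀ * diagonal c * of v + 1 = (of v)ᵀ * diagonal (c + 1) * of v := by
  rw [show diagonal (c + 1) = diagonal c + diagonal 1 from (diagonal_add c 1).symm,
    diagonal_one', Matrix.mul_add, Matrix.add_mul, Matrix.mul_one,
    mul_eq_one_comm.mp hv]

theorem det_conj_diagonal (hv : of v * (of v)ᵀ = 1) (c : n → R) :
    det ((of v)ᵀ * diagonal c * of v) = ∏ i, c i := by
  have hdet : det (of v) * det (of v) = 1 := by
    simpa only [det_mul, det_transpose, det_one] using congrArg det hv
  rw [det_mul, det_mul, det_transpose, det_diagonal, mul_right_comm, hdet, one_mul]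

theorem inv_conj_diagonal {K : Type*} [Field K] {v : n → n → K} (hv : of v * (of v)ᵀ = 1)
    {c : n → K} (hc : ∀ i, c i ≠ 0) :
    ((of v)ᵀ * diagonal c * of v)⁻¹ = (of v)ᵀ * diagonal c⁻¹ * of v := by
  refine inv_eq_right_inv ?_
  have hcc : c * c⁻¹ = 1 := funext fun i => mul_inv_cancel₀ (hc i)
  rw [conj_diagonal_mul_conj_diagonal hv, hcc, diagonal_one', Matrix.mul_one,
    mul_eq_one_comm.mp hv]

end Orthonormal

theorem stmt_10 {N : ℕ} (L : Matrix (Fin N) (Fin N) ℝ)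
    (lam : Fin N → ℝ) (v : Fin N → Fin N → ℝ)
    (horth : ∀ m n, v m ⬝ᵥ v n = if m = n then (1 : ℝ) else 0)
    (hlam : ∀ n, 0 ≤ lam n)
    (hLdecomp : L = ∑ n, lam n • vecMulVec (v n) (v n))
    (A : Finset (Fin N)) :
    principalMinor (L * (L + 1)⁻¹) A =
      (1 / (L + 1).det) *
        ∑ J : Finset (Fin N),
          (∏ n ∈ J, lam n) *
            principalMinor (∑ n ∈ J, vecMulVec (v n) (v n)) A := by
  have hv : of v * (of v)ᵀ = 1 := by
    ext m n
    simpa [mul_apply, one_apply, dotProduct] using horth m n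
  have hne : ∀ n, lam n + 1 ≠ 0 := fun n => by linarith [hlam n]
  have hL : L = (of v)ᵀ * diagonal lam * of v :=
    hLdecomp.trans (sum_smul_vecMulVec_eq_transpose_mul_diagonal_mul lam v)
  have hL1 : L + 1 = (of v)ᵀ * diagonal (lam + 1) * of v := by
    rw [hL, conj_diagonal_add_one hv]
  have hK : L * (L + 1)⁻¹ = ∑ n, (lam n / (lam n + 1)) • vecMulVec (v n) (v n) := by
    rw [hL1, inv_conj_diagonal hv (c := lam + 1) hne, hL, conj_diagonal_mul_conj_diagonal hv,
      sum_smul_vecMulVec_eq_transpose_mul_diagonal_mul]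
    rfl
  rw [hK, hL1, det_conj_diagonal hv, mul_sum]
  simp only [principalMinor, submatrix_sum, submatrix_smul, submatrix_vecMulVec, Pi.smul_apply,
    Pi.add_apply, Pi.one_apply]
  rw [det_sum_smul_vecMulVec_eq_sum_bernoulliWeight]
  refine sum_congr rfl fun J _ => ?_
  rw [bernoulliWeight_div_add_one hne]
  ring
end

section
/- The log-likelihood of an L-ensemble is log-submodular: for a positive semidefinite matrix L and sets Y ⊆ Y' ⊆ {1,...,N} with i ∉ Y', we have det(L_{Y∪{i}})·det(L_{Y'}) ≥ det(L_{Y'∪{i}})·det(L_Y). -/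
/-!
For positive definite `L`, a finset `A` and `a, b ∉ A`, let `S` be the Schur complement of `L_A`
in `L_{A ∪ {a, b}}`, a symmetric `2 × 2` matrix. Then `det L_{A+a} = det L_A · S₀₀`,
`det L_{A+b} = det L_A · S₁₁` and `det L_{A+a+b} = det L_A · det S`, so `det S ≤ S₀₀ S₁₁` is the
inequality for `Y' = Y ∪ {b}`. Adding the elements of `Y' \ Y` one at a time and multiplying
these one-step inequalities gives the general case, and a positive semidefinite `L` is the limit
of the positive definite matrices `L + ε • 1`.
-/

open Matrix BigOperators

namespace Matrix

variable {n m κ ι α : Type*} [Fintype m] [DecidableEq m] [Fintype κ] [DecidableEq κ] [CommRing α]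

noncomputable def schurComplement (L : Matrix n n α) (e : m → n) (f : κ → n) : Matrix κ κ α :=
  L.submatrix f f - L.submatrix f e * (L.submatrix e e)⁻¹ * L.submatrix e f

theorem det_submatrix_sumElim (L : Matrix n n α) {e : m → n} (f : κ → n)
    (he : IsUnit (L.submatrix e e).det) :
    (L.submatrix (Sum.elim e f) (Sum.elim e f)).det =
      (L.submatrix e e).det * (schurComplement L e f).det := by
  have : Invertible (L.submatrix e e) := (isUnit_iff_isUnit_det _ |>.mpr he).invertible
  have hblocks : L.submatrix (Sum.elim e f) (Sum.elim e f) =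
      fromBlocks (L.submatrix e e) (L.submatrix e f) (L.submatrix f e) (L.submatrix f f) := by
    ext (a | a) (b | b) <;> rfl
  rw [hblocks, det_fromBlocks₁₁, invOf_eq_nonsing_inv, schurComplement]

omit [Fintype κ] [DecidableEq κ] in
theorem schurComplement_comp (L : Matrix n n α) (e : m → n) (f : κ → n) (g : ι → κ) :
    schurComplement L e (f ∘ g) = (schurComplement L e f).submatrix g g := by
  ext a b
  simp [schurComplement, mul_apply]

omit [Fintype κ] [DecidableEq κ] in
theorem IsSymm.schurComplement {L : Matrix n n α} (hL : L.IsSymm) (e : m → n) (f : κ → n) :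
    (L.schurComplement e f).IsSymm := by
  simp only [Matrix.schurComplement, IsSymm, transpose_sub, transpose_mul, transpose_nonsing_inv,
    transpose_submatrix, hL.eq, Matrix.mul_assoc]

end Matrix

namespace Finset

theorem insert_mul_le_of_insert_insert_mul_le {α : Type*} [DecidableEq α]
    {f : Finset α → ℝ} (hf : ∀ s, 0 < f s)
    (hpair : ∀ s a b, a ∉ s → b ∉ s → a ≠ b →
      f (insert a (insert b s)) * f s ≤ f (insert a s) * f (insert b s))
    {s t : Finset α} (hst : s ⊆ t) {a : α} (ha : a ∉ t) :
    f (insert a t) * f s ≤ f (insert a s) * f t := by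
  suffices h : ∀ u : Finset α, a ∉ s ∪ u →
      f (insert a (s ∪ u)) * f s ≤ f (insert a s) * f (s ∪ u) by
    simpa [union_eq_right.2 hst] using h t (by rwa [union_eq_right.2 hst])
  intro u
  induction u using Finset.induction_on with
  | empty => simp [mul_comm]
  | insert b u hbu ih =>
    intro ha
    rw [union_insert] at ha ⊢
    by_cases hb : b ∈ s ∪ u
    · rw [insert_eq_of_mem hb] at ha ⊢
      exact ih ha
    have hab : a ≠ b := fun h => ha (h ▸ mem_insert_self _ _)
    have ha' : a ∉ s ∪ u := fun h => ha (mem_insert_of_mem h)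
    have key := hpair (s ∪ u) a b ha' hb hab
    refine le_of_mul_le_mul_right ?_ (hf (s ∪ u))
    calc f (insert a (insert b (s ∪ u))) * f s * f (s ∪ u)
        = f (insert a (insert b (s ∪ u))) * f (s ∪ u) * f s := by ring
      _ ≤ f (insert a (s ∪ u)) * f (insert b (s ∪ u)) * f s :=
          mul_le_mul_of_nonneg_right key (hf s).le
      _ = f (insert a (s ∪ u)) * f s * f (insert b (s ∪ u)) := by ring
      _ ≤ f (insert a s) * f (s ∪ u) * f (insert b (s ∪ u)) :=
          mul_le_mul_of_nonneg_right (ih ha') (hf _).le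
      _ = f (insert a s) * f (insert b (s ∪ u)) * f (s ∪ u) := by ring

end Finset

theorem principalMinor_eq_det_submatrix {N : ℕ} (L : Matrix (Fin N) (Fin N) ℝ)
    {ι : Type*} [Fintype ι] [DecidableEq ι] {A : Finset (Fin N)} {e : ι → Fin N}
    (he : Function.Injective e) (hA : ∀ x, x ∈ A ↔ ∃ k, e k = x) :
    principalMinor L A = (L.submatrix e e).det := by
  let σ : ι ≃ A := Equiv.ofBijective (fun k => ⟨e k, (hA _).2 ⟨k, rfl⟩⟩)
    ⟨fun k l h => he (congrArg Subtype.val h), fun x => ((hA x).1 x.2).imp fun _ h => Subtype.ext h⟩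
  rw [principalMinor, ← det_submatrix_equiv_self σ, submatrix_submatrix]
  rfl

section PrincipalMinor

variable {N : ℕ} {L : Matrix (Fin N) (Fin N) ℝ}

theorem principalMinor_pos (hL : L.PosDef) (A : Finset (Fin N)) : 0 < principalMinor L A :=
  (hL.submatrix Subtype.val_injective).det_pos

theorem principalMinor_union_eq_mul_det_schurComplement (hL : L.PosDef) {A B : Finset (Fin N)}
    {κ : Type*} [Fintype κ] [DecidableEq κ] {f : κ → Fin N} (hf : Function.Injective f)
    (hfA : ∀ k, f k ∉ A) (hB : ∀ x, x ∈ B ↔ x ∈ A ∨ ∃ k, f k = x) :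
    principalMinor L B =
      principalMinor L A * (L.schurComplement ((↑) : A → Fin N) f).det := by
  have hinj : Function.Injective (Sum.elim ((↑) : A → Fin N) f) :=
    Subtype.val_injective.sumElim hf fun a k h => hfA k (h ▸ a.2)
  rw [principalMinor_eq_det_submatrix L hinj (by simpa [Sum.exists] using hB),
    det_submatrix_sumElim]
  · rfl
  · exact (principalMinor_pos hL A).ne'.isUnit

theorem principalMinor_insert_insert_mul_le (hL : L.PosDef) {A : Finset (Fin N)} {a b : Fin N}
    (ha : a ∉ A) (hb : b ∉ A) (hab : a ≠ b) :
    principalMinor L (insert a (insert b A)) * principalMinor L A ≤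
      principalMinor L (insert a A) * principalMinor L (insert b A) := by
  set S := L.schurComplement ((↑) : A → Fin N) ![a, b]
  have hfA : ∀ k, ![a, b] k ∉ A := Fin.forall_fin_two.2 ⟨ha, hb⟩
  have hinsert (k : Fin 2) :
      principalMinor L (insert (![a, b] k) A) = principalMinor L A * S k k := by
    rw [principalMinor_union_eq_mul_det_schurComplement hL (f := ![a, b] ∘ fun _ : Unit => k)
      (fun _ _ _ => rfl) (fun _ => hfA k) (by simp [or_comm, eq_comm]),
      schurComplement_comp, det_unique]
    rfl
  have hinsert₂ : principalMinor L (insert a (insert b A)) = principalMinor L A * S.det := by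
    refine principalMinor_union_eq_mul_det_schurComplement hL (injective_pair_iff_ne.2 hab) hfA ?_
    simp only [Finset.mem_insert, Fin.exists_fin_two, Matrix.cons_val_zero, Matrix.cons_val_one]
    tauto
  have hS : S 1 0 = S 0 1 :=
    ((isHermitian_iff_isSymm.1 hL.isHermitian).schurComplement _ _).apply 0 1
  have h0 := hinsert 0
  have h1 := hinsert 1
  simp only [Matrix.cons_val_zero, Matrix.cons_val_one] at h0 h1
  rw [hinsert₂, h0, h1, det_fin_two, hS]
  nlinarith [sq_nonneg (principalMinor L A * S 0 1)]

end PrincipalMinor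

open Filter Topology

theorem tendsto_principalMinor_add_smul_one {N : ℕ} (L : Matrix (Fin N) (Fin N) ℝ)
    (A : Finset (Fin N)) :
    Tendsto (fun ε : ℝ => principalMinor (L + ε • 1) A) (𝓝 0) (𝓝 (principalMinor L A)) := by
  have hcont : Continuous fun ε : ℝ => principalMinor (L + ε • 1) A := by
    refine Continuous.matrix_det (continuous_matrix fun a b => ?_)
    simp only [submatrix_apply, Matrix.add_apply, Matrix.smul_apply, smul_eq_mul]
    fun_prop
  simpa using hcont.tendsto 0

theorem stmt_12 {N : ℕ} (L : Matrix (Fin N) (Fin N) ℝ) (hL : L.PosSemidef)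
    (Y Y' : Finset (Fin N)) (hYY' : Y ⊆ Y') (i : Fin N) (hi : i ∉ Y') :
    principalMinor L (insert i Y') * principalMinor L Y ≤
      principalMinor L (insert i Y) * principalMinor L Y' := by
  have hpos : ∀ ε > (0 : ℝ), (L + ε • 1).PosDef := fun ε hε =>
    PosDef.posSemidef_add hL (PosDef.one.smul hε)
  have hperturbed : ∀ᶠ ε in 𝓝[>] (0 : ℝ),
      principalMinor (L + ε • 1) (insert i Y') * principalMinor (L + ε • 1) Y ≤
        principalMinor (L + ε • 1) (insert i Y) * principalMinor (L + ε • 1) Y' :=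
    eventually_nhdsWithin_of_forall fun ε hε =>
      Finset.insert_mul_le_of_insert_insert_mul_le (principalMinor_pos (hpos ε hε))
        (fun _ _ _ => principalMinor_insert_insert_mul_le (hpos ε hε)) hYY' hi
  have htendsto (A : Finset (Fin N)) := (tendsto_principalMinor_add_smul_one L A).mono_left
    (nhdsWithin_le_nhds (s := Set.Ioi 0))
  exact le_of_tendsto_of_tendsto ((htendsto _).mul (htendsto _)) ((htendsto _).mul (htendsto _))
    hperturbed
end

section
/- Alternative likelihood formula: for positive semidefinite L and K = L(L+I)^{-1}, the L-ensemble probability satisfies P_L(Y) = det(L_Y)/det(L+I) = det(I_Y K + I_{Ȳ}(I − K)), where I_Y and I_{Ȳ} are the diagonal 0/1 matrices supported on Y and its complement. -/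
/-!
Since `I - L (L + I)⁻¹ = (L + I)⁻¹`, the matrix on the right factors as
`(I_Y L + I_Ȳ) (L + I)⁻¹`. The rows of `I_Y L + I_Ȳ` outside `Y` are rows of the identity, so it is block triangular with
blocks `L_Y` and `I`, and its determinant is the principal minor `det L_Y`.
-/

open Matrix BigOperators

namespace Matrix

variable {ι R : Type*} [Fintype ι] [DecidableEq ι] [CommRing R]

theorem diagonal_indicator_mul_add_apply (A : Matrix ι ι R) (Y : Finset ι) (i j : ι) :
    (diagonal (fun i => if i ∈ Y then (1 : R) else 0) * A +
      diagonal (fun i => if i ∈ Y then (0 : R) else 1)) i j =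
      if i ∈ Y then A i j else (1 : Matrix ι ι R) i j := by
  by_cases hi : i ∈ Y <;> simp [diagonal_mul, diagonal_apply, one_apply, hi]

theorem det_diagonal_indicator_mul_add (A : Matrix ι ι R) (Y : Finset ι) :
    (diagonal (fun i => if i ∈ Y then (1 : R) else 0) * A +
      diagonal (fun i => if i ∈ Y then (0 : R) else 1)).det =
      (A.submatrix ((↑) : Y → ι) (↑)).det := by
  set M := diagonal (fun i => if i ∈ Y then (1 : R) else 0) * A +
    diagonal (fun i => if i ∈ Y then (0 : R) else 1) with hM
  rw [twoBlockTriangular_det M (· ∈ Y)]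
  · have hY : toSquareBlockProp M (· ∈ Y) = A.submatrix ((↑) : Y → ι) (↑) := by
      ext i j
      simp only [toSquareBlockProp_def, of_apply, hM, diagonal_indicator_mul_add_apply, if_pos i.2,
        submatrix_apply]
    have hYc : toSquareBlockProp M (· ∉ Y) = 1 := by
      ext i j
      simp only [toSquareBlockProp_def, of_apply, hM, diagonal_indicator_mul_add_apply, if_neg i.2,
        one_apply, Subtype.ext_iff]
    rw [hY, hYc, det_one, mul_one]
    -- the `Fintype ↥Y` instances produced by `toSquareBlockProp` and by `Finset` differ
    convert rfl
  · intro i hi j hj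
    rw [hM, diagonal_indicator_mul_add_apply, if_neg hi,
      one_apply_ne (ne_of_mem_of_not_mem hj hi).symm]

theorem one_sub_mul_inv_add_one (A : Matrix ι ι R) (h : IsUnit (A + 1).det) :
    1 - A * (A + 1)⁻¹ = (A + 1)⁻¹ := by
  rw [sub_eq_iff_eq_add, ← one_add_mul, add_comm 1 A, mul_nonsing_inv _ h]

end Matrix

theorem stmt_14 {N : ℕ} (L : Matrix (Fin N) (Fin N) ℝ) (hL : L.PosSemidef)
    (Y : Finset (Fin N)) :
    principalMinor L Y / (L + 1).det =
      (Matrix.diagonal (fun i => if i ∈ Y then (1 : ℝ) else 0) * (L * (L + 1)⁻¹) +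
        Matrix.diagonal (fun i => if i ∈ Y then (0 : ℝ) else 1) *
          (1 - L * (L + 1)⁻¹)).det := by
  have hdet : IsUnit (L + 1).det := (PosDef.posSemidef_add hL PosDef.one).det_pos.ne'.isUnit
  rw [one_sub_mul_inv_add_one L hdet, ← mul_assoc, ← add_mul, det_mul, det_nonsing_inv,
    det_diagonal_indicator_mul_add, Ring.inverse_eq_inv', principalMinor, div_eq_mul_inv]
end

section
/- The uniform distribution over k-element subsets of an N-element set is not a determinantal point process for 2 ≤ k ≤ N−2: there is no symmetric matrix K with 0 ⪯ K ⪯ I such that det(K_A) equals the marginal probability under the uniform k-subset distribution for all A. -/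
/-!
Minors of order at most three already over-determine a symmetric kernel `K`. Its diagonal is
`a = P(i ∈ Y)` and each off-diagonal entry squares to `c = a² - P(i, j ∈ Y)`, so a principal
`3 × 3` minor equals `a³ - 3ac + 2xyz` with `(xyz)² = c³`. Hence
`(P(i, j, l ∈ Y) + 2a³ - 3a P(i, j ∈ Y))² = 4c³`. For uniform `k`-subsets of an `N`-set, the
two sides of this identity differ by a positive multiple of `(k - 1)(N - k - 1)`.
-/

open Matrix BigOperators

open Finset

theorem principalMinor_image {N : ℕ} (K : Matrix (Fin N) (Fin N) ℝ) {ι : Type*} [Fintype ι]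
    [DecidableEq ι] {f : ι → Fin N} (hf : f.Injective) :
    principalMinor K (univ.image f) = (K.submatrix f f).det := by
  let e : ι ≃ univ.image f :=
    (Equiv.ofInjective f hf).trans (Equiv.subtypeEquivRight (by simp))
  rw [principalMinor, ← det_submatrix_equiv_self e]
  rfl

theorem Nat.cast_choose_three {K : Type*} [Field K] [CharZero K] (a : ℕ) :
    (a.choose 3 : K) = a * (a - 1) * (a - 2) / 6 := by
  rcases Nat.lt_or_ge a 2 with ha | ha
  · interval_cases a <;> simp [Nat.choose]
  have h : ((a.choose 3 * 3 : ℕ) : K) = ((a.choose 2 * (a - 2) : ℕ) : K) := by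
    rw [Nat.choose_succ_right_eq a 2]
  push_cast [Nat.cast_sub ha, Nat.cast_choose_two] at h
  linear_combination h / 3

/-- `P(A ⊆ Y)` for any `j`-set `A`, when `Y` is a uniformly random `k`-subset of an `N`-set. -/
noncomputable def uniformMarginal (N k j : ℕ) : ℝ :=
  k.choose j / N.choose j

theorem card_filter_powersetCard_subset_mul_choose {α : Type*} [Fintype α] [DecidableEq α]
    (k : ℕ) (A : Finset α) :
    #{Y ∈ powersetCard k univ | A ⊆ Y} * (Fintype.card α).choose #A =
      (Fintype.card α).choose k * k.choose #A := by
  rcases le_or_gt #A k with hA | hA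
  · rw [card_filter_powersetCard_subset A univ k (subset_univ A) hA, card_univ,
      Nat.choose_mul hA, mul_comm]
  · rw [Nat.choose_eq_zero_of_lt hA, mul_zero, mul_eq_zero, card_eq_zero]
    left
    refine filter_false_of_mem fun Y hY hAY => ?_
    have := card_le_card hAY
    rw [(mem_powersetCard.mp hY).2] at this
    omega

theorem card_filter_powersetCard_subset_div_choose {N k : ℕ} (hkN : k ≤ N)
    (A : Finset (Fin N)) :
    (#{Y ∈ powersetCard k univ | A ⊆ Y} : ℝ) / N.choose k = uniformMarginal N k #A := by
  have hA : #A ≤ N := by simpa using card_le_univ A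
  have h := card_filter_powersetCard_subset_mul_choose k A
  rw [Fintype.card_fin] at h
  rw [uniformMarginal, div_eq_div_iff (by positivity [Nat.choose_pos hkN])
    (by positivity [Nat.choose_pos hA])]
  exact_mod_cast h.trans (mul_comm _ _)

theorem uniformMarginal_sq_lt {N k : ℕ} (hk : 2 ≤ k) (hkN : k + 2 ≤ N) :
    (uniformMarginal N k 3 + 2 * uniformMarginal N k 1 ^ 3
        - 3 * uniformMarginal N k 1 * uniformMarginal N k 2) ^ 2 <
      4 * (uniformMarginal N k 1 ^ 2 - uniformMarginal N k 2) ^ 3 := by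
  simp only [uniformMarginal, Nat.choose_one_right, Nat.cast_choose_two, Nat.cast_choose_three]
  have hk' : (2 : ℝ) ≤ k := by exact_mod_cast hk
  have hkN' : (k : ℝ) + 2 ≤ N := by exact_mod_cast hkN
  have hk0 : (0 : ℝ) < k := by linarith
  have hN0 : (0 : ℝ) < N := by linarith
  have hk1 : (0 : ℝ) < k - 1 := by linarith
  have hN1 : (0 : ℝ) < N - 1 := by linarith
  have hN2 : (0 : ℝ) < N - 2 := by linarith
  have hNk : (0 : ℝ) < N - k := by linarith
  have hNk1 : (0 : ℝ) < N - k - 1 := by linarith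
  rw [← sub_pos]
  convert (show (0 : ℝ) < 4 * (k ^ 2 * (N - k) ^ 2 * ((k - 1) * (N - k - 1))) /
      (N ^ 4 * (N - 1) ^ 3 * (N - 2) ^ 2) by positivity) using 1
  field_simp
  ring

theorem Matrix.IsSymm.sq_det_add_eq_of_fin_three {R : Type*} [CommRing R]
    {M : Matrix (Fin 3) (Fin 3) R} (hM : M.IsSymm) {a q : R} (hdiag : ∀ i, M i i = a)
    (hoff : ∀ i j, i ≠ j → M i j ^ 2 = a ^ 2 - q) :
    (M.det + 2 * a ^ 3 - 3 * a * q) ^ 2 = 4 * (a ^ 2 - q) ^ 3 := by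
  have hx := hoff 0 1 (by decide)
  have hy := hoff 1 2 (by decide)
  have hz := hoff 0 2 (by decide)
  have hdet : M.det =
      a ^ 3 - a * (M 0 1 ^ 2 + M 1 2 ^ 2 + M 0 2 ^ 2) + 2 * (M 0 1 * M 1 2 * M 0 2) := by
    rw [det_fin_three, hdiag 0, hdiag 1, hdiag 2, hM.apply 0 1, hM.apply 1 2, hM.apply 0 2]
    ring
  have hxyz : (M 0 1 * M 1 2 * M 0 2) ^ 2 = (a ^ 2 - q) ^ 3 := by
    rw [mul_pow, mul_pow, hx, hy, hz]
    ring
  rw [hdet, hx, hy, hz]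
  linear_combination 4 * hxyz

theorem stmt_18 {N k : ℕ} (hk2 : 2 ≤ k) (hkN : k ≤ N - 2) :
    ¬ ∃ K : Matrix (Fin N) (Fin N) ℝ,
      K.IsSymm ∧ K.PosSemidef ∧ (1 - K).PosSemidef ∧
      ∀ A : Finset (Fin N),
        principalMinor K A =
          (((Finset.powersetCard k (Finset.univ : Finset (Fin N))).filter
              (fun Y => A ⊆ Y)).card : ℝ) / (N.choose k : ℝ) := by
  rintro ⟨K, hsymm, -, -, hK⟩
  have hmarg {m : ℕ} {f : Fin m → Fin N} (hf : f.Injective) :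
      (K.submatrix f f).det = uniformMarginal N k m := by
    rw [← principalMinor_image K hf, hK, card_filter_powersetCard_subset_div_choose (by omega),
      card_image_of_injective _ hf, card_fin]
  have hdiag (i : Fin N) : K i i = uniformMarginal N k 1 := by
    have h := hmarg (f := ![i]) (Function.injective_of_subsingleton _)
    rwa [det_fin_one] at h
  have hoff {i j : Fin N} (hij : i ≠ j) :
      K i j ^ 2 = uniformMarginal N k 1 ^ 2 - uniformMarginal N k 2 := by
    have h := hmarg (f := ![i, j]) (by simpa [Fin.cons_injective_iff] using hij)
    rw [det_fin_two] at h
    simp only [submatrix_apply, cons_val_zero, cons_val_one, hdiag, hsymm.apply i j] at h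
    linear_combination -h
  have hf := Fin.castLE_injective (show 3 ≤ N by omega)
  have hsq := (hsymm.submatrix _).sq_det_add_eq_of_fin_three (fun i => hdiag _)
    (fun i j hij => hoff (hf.ne hij))
  rw [hmarg hf] at hsq
  exact (uniformMarginal_sq_lt hk2 (by omega)).ne hsq
end
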